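/- For every positive integer n, lcm(1, 2, ..., n) = lcm(1·C(n,1), 2·C(n,2), ..., n·C(n,n)). -/

import Mathlib

open Finset

namespace Nat

/-- By Kummer's theorem `v_p (n.choose k)` counts the carries in the base-`p` addition
`k + (n - k)`; there is no carry in the lowest `v_p k` digits, where `k` has only zeros. -/
theorem factorization_choose_add_factorization_le_log {p n k : ℕ} (hp : p.Prime) (hk : k ≠ 0)
    (hkn : k ≤ n) : (choose n k).factorization p + k.factorization p ≤ log p n := by
  set a := k.factorization p
  have ha : a ≤ log p n :=
    le_log_of_pow_le hp.one_lt ((le_of_dvd (pos_of_ne_zero hk) (ordProj_dvd k p)).trans hkn)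
  have hcarries : {i ∈ Ico 1 (log p n + 1) | p ^ i ≤ k % p ^ i + (n - k) % p ^ i}
      ⊆ Ico (a + 1) (log p n + 1) := by
    intro i hi
    simp only [mem_filter, mem_Ico] at hi ⊢
    refine ⟨?_, hi.1.2⟩
    by_contra! hia
    have hdvd : p ^ i ∣ k := (pow_dvd_pow p (by omega)).trans (ordProj_dvd k p)
    have hlt : (n - k) % p ^ i < p ^ i := mod_lt _ (pow_pos hp.pos i)
    rw [mod_eq_zero_of_dvd hdvd] at hi
    omega
  rw [factorization_choose hp hkn (lt_add_one _)]
  have := card_le_card hcarries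
  rw [card_Ico] at this
  omega

theorem lcm_Icc_id_ne_zero (n : ℕ) : (Icc 1 n).lcm id ≠ 0 := by
  simp

theorem pow_log_dvd_lcm_Icc_id (p : ℕ) {n : ℕ} (hn : n ≠ 0) : p ^ log p n ∣ (Icc 1 n).lcm id := by
  have hpos : 0 < p ^ log p n := by
    rcases p.eq_zero_or_pos with rfl | hp
    · simp
    · positivity
  exact dvd_lcm (f := id) (mem_Icc.2 ⟨hpos, pow_log_le_self p hn⟩)

theorem mul_choose_dvd_lcm_Icc_id {n k : ℕ} (hk : k ≠ 0) (hkn : k ≤ n) :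
    k * choose n k ∣ (Icc 1 n).lcm id := by
  have hchoose : choose n k ≠ 0 := (choose_pos hkn).ne'
  rw [← factorization_prime_le_iff_dvd (mul_ne_zero hk hchoose) (lcm_Icc_id_ne_zero n)]
  intro p hp
  calc (k * choose n k).factorization p
      = (choose n k).factorization p + k.factorization p := by
        rw [factorization_mul hk hchoose, Finsupp.add_apply, add_comm]
    _ ≤ log p n := factorization_choose_add_factorization_le_log hp hk hkn
    _ ≤ ((Icc 1 n).lcm id).factorization p :=
        (hp.pow_dvd_iff_le_factorization (lcm_Icc_id_ne_zero n)).1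
          (pow_log_dvd_lcm_Icc_id p (by omega))

end Nat

theorem stmt_3_general (n : ℕ) :
    Finset.lcm (Finset.Icc 1 n) id
      = Finset.lcm (Finset.Icc 1 n) (fun k => k * Nat.choose n k) := by
  apply Nat.dvd_antisymm
  · exact lcm_dvd fun k hk => (dvd_mul_right k _).trans (dvd_lcm hk)
  · refine lcm_dvd fun k hk => ?_
    rw [mem_Icc] at hk
    exact Nat.mul_choose_dvd_lcm_Icc_id (by omega) hk.2

theorem stmt_3 (n : ℕ) (hn : 0 < n) :
    Finset.lcm (Finset.Icc 1 n) id
      = Finset.lcm (Finset.Icc 1 n) (fun k => k * Nat.choose n k) :=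
  stmt_3_general n
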